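/- In the universal enveloping algebra U(𝔫𝔴) of the Nappi–Witten Lie algebra, the quadratic Casimir element C := (1/2)(ι(J⁺)ι(J⁻) + ι(J⁻)ι(J⁺)) + ι(J)ι(T) + ι(T)ι(J) commutes with ι(x) for every x ∈ 𝔫𝔴, where ι : 𝔫𝔴 → U(𝔫𝔴) is the canonical embedding; hence C is central in U(𝔫𝔴). -/

import Mathlib

/-!
The Nappi–Witten Lie algebra `𝔫𝔴` with basis `J⁺, J⁻, J, T` (coordinates `0,1,2,3`),
brackets `[J⁺,J⁻] = 2iT`, `[J,J⁺] = iJ⁺`, `[J,J⁻] = −iJ⁻`, `T` central, together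
with its universal enveloping algebra `U(𝔫𝔴)` and the canonical embedding `ι`.
-/

/-- Elements of 𝔫𝔴 as coordinate vectors `(x 0)·J⁺ + (x 1)·J⁻ + (x 2)·J + (x 3)·T`. -/
def NW : Type := Fin 4 → ℂ

instance : AddCommGroup NW := inferInstanceAs (AddCommGroup (Fin 4 → ℂ))
noncomputable instance : Module ℂ NW := inferInstanceAs (Module ℂ (Fin 4 → ℂ))

namespace NW

/-- The coordinates of an element of 𝔫𝔴. -/
def coord (x : NW) : Fin 4 → ℂ := x

lemma add_apply' (x y : NW) (i : Fin 4) : coord (x + y) i = coord x i + coord y i := rfl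
lemma smul_apply' (c : ℂ) (x : NW) (i : Fin 4) : coord (c • x) i = c * coord x i := rfl
lemma zero_apply' (i : Fin 4) : coord (0 : NW) i = 0 := rfl
lemma ext' (x y : NW) (h : ∀ i, coord x i = coord y i) : x = y := funext h

/-- The Lie bracket of 𝔫𝔴 in coordinates. -/
def bkt (x y : NW) : NW :=
  (![Complex.I * (coord x 2 * coord y 0 - coord x 0 * coord y 2),
     -Complex.I * (coord x 2 * coord y 1 - coord x 1 * coord y 2),
     0,
     2 * Complex.I * (coord x 0 * coord y 1 - coord x 1 * coord y 0)] : Fin 4 → ℂ)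

lemma bkt_apply (x y : NW) (i : Fin 4) :
    coord (bkt x y) i =
      (![Complex.I * (coord x 2 * coord y 0 - coord x 0 * coord y 2),
         -Complex.I * (coord x 2 * coord y 1 - coord x 1 * coord y 2),
         0,
         2 * Complex.I * (coord x 0 * coord y 1 - coord x 1 * coord y 0)] : Fin 4 → ℂ) i := rfl

instance : LieRing NW where
  bracket := bkt
  add_lie x y z := by
    apply ext'; intro i
    fin_cases i <;> simp [bkt_apply, add_apply'] <;> ring
  lie_add x y z := by
    apply ext'; intro i
    fin_cases i <;> simp [bkt_apply, add_apply'] <;> ring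
  lie_self x := by
    apply ext'; intro i
    fin_cases i <;> simp [bkt_apply, zero_apply'] <;> ring
  leibniz_lie x y z := by
    apply ext'; intro i
    fin_cases i <;> simp [bkt_apply, add_apply'] <;> ring

lemma lie_def (x y : NW) : ⁅x, y⁆ = bkt x y := rfl

noncomputable instance : LieAlgebra ℂ NW where
  lie_smul c x y := by
    apply ext'; intro i
    fin_cases i <;> simp [lie_def, bkt_apply, smul_apply'] <;> ring

/-- `J⁺`. -/
def Jp : NW := (![1, 0, 0, 0] : Fin 4 → ℂ)
/-- `J⁻`. -/
def Jm : NW := (![0, 1, 0, 0] : Fin 4 → ℂ)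
/-- `J`. -/
def J : NW := (![0, 0, 1, 0] : Fin 4 → ℂ)
/-- `T`. -/
def T : NW := (![0, 0, 0, 1] : Fin 4 → ℂ)

end NW

attribute [local instance] LieRing.ofAssociativeRing

/-- The canonical embedding `ι : 𝔫𝔴 → U(𝔫𝔴)`. -/
noncomputable def iota : NW →ₗ⁅ℂ⁆ UniversalEnvelopingAlgebra ℂ NW :=
  UniversalEnvelopingAlgebra.ι ℂ

/-- The quadratic Casimir element
`C = (1/2)(ι(J⁺)ι(J⁻) + ι(J⁻)ι(J⁺)) + ι(J)ι(T) + ι(T)ι(J)` of `U(𝔫𝔴)`. -/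
noncomputable def casimir : UniversalEnvelopingAlgebra ℂ NW :=
  (1 / 2 : ℂ) • (iota NW.Jp * iota NW.Jm + iota NW.Jm * iota NW.Jp)
    + iota NW.J * iota NW.T + iota NW.T * iota NW.J

/-!
Write `x = a J⁺ + b J⁻ + c J + d T`. Since `ad (ι x)` is a derivation of `U(𝔫𝔴)`, `⁅ι x, C⁆` expands
through `⁅x, J⁺⁆ = ic J⁺ - 2ib T`, `⁅x, J⁻⁆ = -ic J⁻ + 2ia T`, `⁅x, J⁆ = -ia J⁺ + ib J⁻` and
`⁅x, T⁆ = 0`, and the resulting terms cancel in pairs. The centralizer of `C` is then a subalgebra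
containing `ι(𝔫𝔴)`, which generates `U(𝔫𝔴)`.
-/

theorem Ring.lie_mul {A : Type*} [Ring A] (a b c : A) : ⁅a, b * c⁆ = ⁅a, b⁆ * c + b * ⁅a, c⁆ := by
  simp only [Ring.lie_def]; noncomm_ring

namespace UniversalEnvelopingAlgebra

variable {R L : Type*} [CommRing R] [LieRing L] [LieAlgebra R L]

theorem adjoin_range_ι :
    Algebra.adjoin R (Set.range (ι R : L →ₗ⁅R⁆ UniversalEnvelopingAlgebra R L)) = ⊤ := by
  have hι : Set.range (ι R : L →ₗ⁅R⁆ UniversalEnvelopingAlgebra R L) =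
      mkAlgHom R L '' Set.range (TensorAlgebra.ι R) := by
    rw [← Set.range_comp]; rfl
  rw [hι, ← AlgHom.map_adjoin, TensorAlgebra.adjoin_range_ι, Algebra.map_top]
  exact RingCon.range_mkₐ

theorem commute_of_forall_commute_ι {a : UniversalEnvelopingAlgebra R L}
    (h : ∀ x, Commute a (ι R x)) (u : UniversalEnvelopingAlgebra R L) : Commute a u :=
  Algebra.commute_of_mem_adjoin_of_forall_mem_commute
    (by rw [adjoin_range_ι]; exact Algebra.mem_top)
    (by rintro _ ⟨x, rfl⟩; exact h x)

end UniversalEnvelopingAlgebra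

namespace NW

open Complex

theorem lie_Jp (x : NW) : ⁅x, Jp⁆ = (I * coord x 2) • Jp + (-2 * I * coord x 1) • T := by
  apply ext'; intro i
  simp only [lie_def, bkt_apply, add_apply', smul_apply']
  fin_cases i <;> simp [coord, Jp, T]

theorem lie_Jm (x : NW) : ⁅x, Jm⁆ = (-I * coord x 2) • Jm + (2 * I * coord x 0) • T := by
  apply ext'; intro i
  simp only [lie_def, bkt_apply, add_apply', smul_apply']
  fin_cases i <;> simp [coord, Jm, T]

theorem lie_J (x : NW) : ⁅x, J⁆ = (-I * coord x 0) • Jp + (I * coord x 1) • Jm := by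
  apply ext'; intro i
  simp only [lie_def, bkt_apply, add_apply', smul_apply']
  fin_cases i <;> simp [coord, Jp, Jm, J]

theorem lie_T (x : NW) : ⁅x, T⁆ = 0 := by
  apply ext'; intro i
  simp only [lie_def, bkt_apply, zero_apply']
  fin_cases i <;> simp [coord, T]

end NW

open NW in
theorem commute_casimir_iota (x : NW) : Commute casimir (iota x) := by
  rw [Commute.symm_iff, commute_iff_lie_eq]
  simp only [casimir, lie_add, lie_smul, Ring.lie_mul, ← LieHom.map_lie, lie_Jp, lie_Jm, lie_J,
    lie_T, map_add, map_smul, map_zero, add_mul, mul_add, smul_mul_assoc, mul_smul_comm,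
    zero_mul, mul_zero]
  module

/-- The quadratic Casimir element commutes with `ι(x)` for every `x ∈ 𝔫𝔴`;
hence it is central in `U(𝔫𝔴)`. -/
theorem casimir_central :
    (∀ x : NW, casimir * iota x = iota x * casimir) ∧
    (∀ u : UniversalEnvelopingAlgebra ℂ NW, casimir * u = u * casimir) := by
  have h := commute_casimir_iota
  exact ⟨fun x => (h x).eq,
    fun u => (UniversalEnvelopingAlgebra.commute_of_forall_commute_ι h u).eq⟩
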